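/- Let A and B be lattices each having a least element 0. If every compact bi-ideal of A×B is capped, then the tensor product A⊗B is a lattice; that is, the intersection of any two compact bi-ideals of A×B is compact. -/

import Mathlib

/-! Tensor products of lattices with zero: bi-ideals, pure tensors,
compact bi-ideals, capped bi-ideals. -/

universe u v

section TensorDefs

variable {A : Type u} {B : Type v}

/-- The set `⊥_{A,B} = (A × {0}) ∪ ({0} × B)`. -/
def tensorBot (A : Type u) (B : Type v) [Lattice A] [OrderBot A]
    [Lattice B] [OrderBot B] : Set (A × B) :=
  {p | p.1 = ⊥ ∨ p.2 = ⊥}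

/-- A bi-ideal of `A × B`: a down-set containing `⊥_{A,B}` and closed under
lateral joins. -/
def IsBiIdeal [Lattice A] [OrderBot A] [Lattice B] [OrderBot B]
    (I : Set (A × B)) : Prop :=
  tensorBot A B ⊆ I ∧
  (∀ p ∈ I, ∀ q : A × B, q.1 ≤ p.1 → q.2 ≤ p.2 → q ∈ I) ∧
  (∀ a : A, ∀ b b' : B, (a, b) ∈ I → (a, b') ∈ I → (a, b ⊔ b') ∈ I) ∧
  (∀ a a' : A, ∀ b : B, (a, b) ∈ I → (a', b) ∈ I → (a ⊔ a', b) ∈ I)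

/-- The pure tensor `a ⊗ b = ⊥_{A,B} ∪ {(x,y) : x ≤ a ∧ y ≤ b}`. -/
def pureTensor [Lattice A] [OrderBot A] [Lattice B] [OrderBot B]
    (a : A) (b : B) : Set (A × B) :=
  tensorBot A B ∪ {p | p.1 ≤ a ∧ p.2 ≤ b}

/-- The smallest bi-ideal of `A × B` containing a given set, i.e. the join in the
lattice `A ⊗̄ B` of bi-ideals of the pure tensors contained in it. -/
def biIdealGen [Lattice A] [OrderBot A] [Lattice B] [OrderBot B]
    (S : Set (A × B)) : Set (A × B) :=
  ⋂₀ {I : Set (A × B) | IsBiIdeal I ∧ S ⊆ I}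

/-- The compact elements of `A ⊗̄ B` are exactly the bi-ideals that are finite
joins of pure tensors; these form the tensor product `A ⊗ B`. -/
def IsCompactBiIdeal [Lattice A] [OrderBot A] [Lattice B] [OrderBot B]
    (I : Set (A × B)) : Prop :=
  ∃ s : Finset (A × B), I = biIdealGen (⋃ p ∈ s, pureTensor p.1 p.2)

/-- `A ⊗ B` is a lattice iff the intersection of any two compact bi-ideals is
compact. -/
def TensorIsLattice (A : Type u) (B : Type v) [Lattice A] [OrderBot A]
    [Lattice B] [OrderBot B] : Prop :=
  ∀ I J : Set (A × B), IsCompactBiIdeal I → IsCompactBiIdeal J →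
    IsCompactBiIdeal (I ∩ J)

/-- A bi-ideal is capped if it is the down-set generated by `Γ ∪ ⊥_{A,B}` for some
finite `Γ ⊆ A × B`. -/
def IsCappedBiIdeal [Lattice A] [OrderBot A] [Lattice B] [OrderBot B]
    (I : Set (A × B)) : Prop :=
  ∃ Γ : Finset (A × B),
    I = tensorBot A B ∪ {q : A × B | ∃ p ∈ Γ, q.1 ≤ p.1 ∧ q.2 ≤ p.2}

/-- `A ⊗ B` is a capped tensor product if every element of `A ⊗ B` (i.e. every
compact bi-ideal of `A × B`) is capped. -/
def IsCappedTensorProduct (A : Type u) (B : Type v) [Lattice A] [OrderBot A]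
    [Lattice B] [OrderBot B] : Prop :=
  ∀ I : Set (A × B), IsCompactBiIdeal I → IsCappedBiIdeal I

end TensorDefs

/-! The intersection of two capped bi-ideals is capped by the pairwise meets of their caps, and a
capped bi-ideal is the bi-ideal generated by the pure tensors of its caps, hence compact. -/

section CappedBiIdeals

variable {A : Type u} {B : Type v} [Lattice A] [OrderBot A] [Lattice B] [OrderBot B]

lemma isBiIdeal_biIdealGen (S : Set (A × B)) : IsBiIdeal (biIdealGen S) :=
  ⟨fun _ hp _ hK => hK.1.1 hp,
    fun p hp q h₁ h₂ _ hK => hK.1.2.1 p (hp _ hK) q h₁ h₂,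
    fun a b b' h h' _ hK => hK.1.2.2.1 a b b' (h _ hK) (h' _ hK),
    fun a a' b h h' _ hK => hK.1.2.2.2 a a' b (h _ hK) (h' _ hK)⟩

lemma subset_biIdealGen (S : Set (A × B)) : S ⊆ biIdealGen S :=
  fun _ hq _ hK => hK.2 hq

lemma biIdealGen_subset {S K : Set (A × B)} (hK : IsBiIdeal K) (hSK : S ⊆ K) :
    biIdealGen S ⊆ K :=
  fun _ hq => hq K ⟨hK, hSK⟩

lemma IsBiIdeal.inter {I J : Set (A × B)} (hI : IsBiIdeal I) (hJ : IsBiIdeal J) :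
    IsBiIdeal (I ∩ J) :=
  ⟨Set.subset_inter hI.1 hJ.1,
    fun p hp q h₁ h₂ => ⟨hI.2.1 p hp.1 q h₁ h₂, hJ.2.1 p hp.2 q h₁ h₂⟩,
    fun a b b' h h' => ⟨hI.2.2.1 a b b' h.1 h'.1, hJ.2.2.1 a b b' h.2 h'.2⟩,
    fun a a' b h h' => ⟨hI.2.2.2 a a' b h.1 h'.1, hJ.2.2.2 a a' b h.2 h'.2⟩⟩

lemma IsCompactBiIdeal.isBiIdeal {I : Set (A × B)} (hI : IsCompactBiIdeal I) : IsBiIdeal I := by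
  obtain ⟨s, rfl⟩ := hI
  exact isBiIdeal_biIdealGen _

open scoped FinsetFamily in
lemma IsCappedBiIdeal.inter {I J : Set (A × B)} (hI : IsCappedBiIdeal I)
    (hJ : IsCappedBiIdeal J) : IsCappedBiIdeal (I ∩ J) := by
  classical
  obtain ⟨Γ₁, rfl⟩ := hI
  obtain ⟨Γ₂, rfl⟩ := hJ
  refine ⟨Γ₁ ⊼ Γ₂, Set.ext fun q => ?_⟩
  simp only [Set.mem_inter_iff, Set.mem_union, Set.mem_ofPred_eq, Finset.mem_infs]
  constructor
  · rintro ⟨hq₁ | ⟨p₁, hp₁, h₁⟩, hq₂ | ⟨p₂, hp₂, h₂⟩⟩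
    · exact Or.inl hq₁
    · exact Or.inl hq₁
    · exact Or.inl hq₂
    · exact Or.inr ⟨p₁ ⊓ p₂, ⟨p₁, hp₁, p₂, hp₂, rfl⟩, le_inf h₁.1 h₂.1, le_inf h₁.2 h₂.2⟩
  · rintro (hq | ⟨_, ⟨p₁, hp₁, p₂, hp₂, rfl⟩, h⟩)
    · exact ⟨Or.inl hq, Or.inl hq⟩
    · exact ⟨Or.inr ⟨p₁, hp₁, h.1.trans inf_le_left, h.2.trans inf_le_left⟩,
        Or.inr ⟨p₂, hp₂, h.1.trans inf_le_right, h.2.trans inf_le_right⟩⟩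

lemma IsBiIdeal.isCompactBiIdeal_of_isCapped {I : Set (A × B)} (hI : IsBiIdeal I)
    (hcap : IsCappedBiIdeal I) : IsCompactBiIdeal I := by
  obtain ⟨Γ, hΓ⟩ := hcap
  refine ⟨Γ, Set.Subset.antisymm ?_ (biIdealGen_subset hI ?_)⟩
  · rw [hΓ]
    rintro q (hq | ⟨p, hp, hqp⟩)
    · exact (isBiIdeal_biIdealGen _).1 hq
    · exact subset_biIdealGen _ (Set.mem_biUnion hp (Or.inr hqp))
  · rw [Set.iUnion₂_subset_iff, hΓ]
    rintro p hp q (hq | hqp)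
    · exact Or.inl hq
    · exact Or.inr ⟨p, hp, hqp⟩

end CappedBiIdeals

/-- if every compact bi-ideal of `A × B` is capped, then the
tensor product `A ⊗ B` is a lattice, i.e. the intersection of any two compact
bi-ideals is compact. -/
theorem capped_tensor_product_is_lattice (A : Type u) (B : Type v)
    [Lattice A] [OrderBot A] [Lattice B] [OrderBot B]
    (hcapped : IsCappedTensorProduct A B) :
    TensorIsLattice A B :=
  fun I J hI hJ => (hI.isBiIdeal.inter hJ.isBiIdeal).isCompactBiIdeal_of_isCapped
    ((hcapped I hI).inter (hcapped J hJ))
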